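/- Let K be an algebraically closed field, complete with respect to a nontrivial non-Archimedean absolute value. Define d(ξ, ξ') = 2·diam(ξ ∨ ξ') − diam(ξ) − diam(ξ') for ξ, ξ' ∈ 𝔸¹_Berk(K), where ξ ∨ ξ' is the least upper bound of ξ and ξ' for the pointwise partial order. Then d is a metric on 𝔸¹_Berk(K): d(ξ,ξ') ≥ 0 with equality iff ξ = ξ', d is symmetric, and d satisfies the triangle inequality. -/

import Mathlib

open Polynomial

/-- A non-Archimedean absolute value on a field `K`. -/
def IsNonarchAbs {K : Type*} [Field K] (abv : K → ℝ) : Prop :=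
  (∀ x, 0 ≤ abv x) ∧ (∀ x, abv x = 0 ↔ x = 0) ∧
  (∀ x y, abv (x * y) = abv x * abv y) ∧
  (∀ x y, abv (x + y) ≤ max (abv x) (abv y))

/-- A multiplicative seminorm on `K[X]` extending the absolute value `abv`. -/
def IsMultSeminorm {K : Type*} [Field K] (abv : K → ℝ) (N : Polynomial K → ℝ) : Prop :=
  (∀ f, 0 ≤ N f) ∧ (∀ c : K, N (C c) = abv c) ∧
  (∀ f g, N (f + g) ≤ N f + N g) ∧ (∀ f g, N (f * g) = N f * N g)

/-- The diameter of a point of the Berkovich line: `diam ξ = inf {‖X - c‖_ξ : c ∈ K}`. -/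
noncomputable def diamB {K : Type*} [Field K] (N : Polynomial K → ℝ) : ℝ :=
  ⨅ c : K, N (X - C c)

/-- The pointwise partial order on seminorms. -/
def BerkLE {K : Type*} [Field K] (N N' : Polynomial K → ℝ) : Prop :=
  ∀ f, N f ≤ N' f

/-- `Z` is the least upper bound `N ∨ N'` of the seminorms `N, N'`. -/
def IsBerkJoin {K : Type*} [Field K] (abv : K → ℝ) (N N' Z : Polynomial K → ℝ) : Prop :=
  IsMultSeminorm abv Z ∧ BerkLE N Z ∧ BerkLE N' Z ∧
    ∀ W, IsMultSeminorm abv W → BerkLE N W → BerkLE N' W → BerkLE Z W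

/-- The value `d(ξ,ξ') = 2 diam(ξ ∨ ξ') - diam ξ - diam ξ'`, where `Z = ξ ∨ ξ'`. -/
noncomputable def smallDist {K : Type*} [Field K] (N N' Z : Polynomial K → ℝ) : ℝ :=
  2 * diamB Z - diamB N - diamB N'

/-!
A multiplicative seminorm on `K[X]` extending the non-Archimedean `|·|` is itself
non-Archimedean: the binomial expansion gives `‖f + g‖ⁿ ≤ (n + 1) max (‖f‖, ‖g‖)ⁿ`. As `K` is
algebraically closed, such a seminorm is determined by its values on the linear polynomials.

The key estimate is that `ζ ≤ ξ` implies `‖X - c‖_ξ ≤ max (‖X - c‖_ζ, diam ξ)`: if some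
`‖X - a‖_ξ` is smaller than `‖X - c‖_ξ`, the isosceles principle gives
`‖X - c‖_ξ = |a - c| ≤ ‖X - c‖_ζ`. Hence two points above a common point are ordered like
their diameters, and `ζ ≤ ξ` with `diam ξ ≤ diam ζ` forces `ξ = ζ`. This gives positivity
of `d`, and in the triangle inequality the joins `ξ₁ ∨ ξ₂`, `ξ₂ ∨ ξ₃`, both above
`ξ₂`, are comparable, so the larger one dominates `ξ₁ ∨ ξ₃`.
-/

theorem le_of_forall_pow_le_succ_mul_pow {t M : ℝ} (hM : 0 ≤ M)
    (h : ∀ n : ℕ, t ^ n ≤ (n + 1) * M ^ n) : t ≤ M := by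
  by_contra! hMt
  rcases hM.eq_or_lt with rfl | hM
  · linarith [h 1]
  obtain ⟨m, hm⟩ := Real.exists_natCast_add_one_lt_pow_of_one_lt ((one_lt_div hM).mpr hMt)
  rw [div_pow, lt_div_iff₀ (by positivity)] at hm
  linarith [h m]

theorem MulRingSeminorm.isNonarchimedean_of_natCast_le_one {R : Type*} [CommRing R]
    (p : MulRingSeminorm R) (h : ∀ n : ℕ, p n ≤ 1) : IsNonarchimedean p := by
  intro a b
  set M := max (p a) (p b)
  have hterm (n k : ℕ) (hk : k ≤ n) : p (a ^ k * b ^ (n - k) * n.choose k) ≤ M ^ n := by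
    rw [map_mul, map_mul, map_pow, map_pow, ← pow_mul_pow_sub M hk, ← mul_one (_ * M ^ (n - k))]
    gcongr
    exacts [le_max_left _ _, le_max_right _ _, h _]
  refine le_of_forall_pow_le_succ_mul_pow ((apply_nonneg p a).trans (le_max_left _ _)) fun n ↦ ?_
  calc p (a + b) ^ n = p (∑ k ∈ Finset.range (n + 1), a ^ k * b ^ (n - k) * n.choose k) := by
        rw [← map_pow, add_pow]
    _ ≤ ∑ k ∈ Finset.range (n + 1), p (a ^ k * b ^ (n - k) * n.choose k) :=
        Finset.le_sum_of_subadditive p (map_zero p).le (map_add_le_add p) _ _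
    _ ≤ ∑ k ∈ Finset.range (n + 1), M ^ n :=
        Finset.sum_le_sum fun k hk ↦ hterm n k (Nat.lt_succ_iff.mp (Finset.mem_range.mp hk))
    _ = (n + 1) * M ^ n := by simp

namespace IsNonarchAbs

variable {K : Type*} [Field K] {abv : K → ℝ}

def toAbsoluteValue (habv : IsNonarchAbs abv) : AbsoluteValue K ℝ where
  toFun := abv
  map_mul' := habv.2.2.1
  nonneg' := habv.1
  eq_zero' := habv.2.1
  add_le' x y := (habv.2.2.2 x y).trans (max_le_add_of_nonneg (habv.1 x) (habv.1 y))

end IsNonarchAbs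

namespace IsMultSeminorm

variable {K : Type*} [Field K] {abv : K → ℝ} {N : K[X] → ℝ}

def toMulRingSeminorm (hN : IsMultSeminorm abv N) (habv : IsNonarchAbs abv) :
    MulRingSeminorm K[X] where
  toFun := N
  map_zero' := by rw [← C_0, hN.2.1]; exact map_zero habv.toAbsoluteValue
  add_le' := hN.2.2.1
  neg' f := by
    rw [neg_eq_neg_one_mul, ← C_1, ← C_neg, hN.2.2.2, hN.2.1,
      show abv (-1) = 1 from (habv.toAbsoluteValue.map_neg 1).trans habv.toAbsoluteValue.map_one,
      one_mul]
  map_one' := by rw [← C_1, hN.2.1]; exact habv.toAbsoluteValue.map_one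
  map_mul' := hN.2.2.2

theorem isNonarchimedean (hN : IsMultSeminorm abv N) (habv : IsNonarchAbs abv) :
    IsNonarchimedean N :=
  (hN.toMulRingSeminorm habv).isNonarchimedean_of_natCast_le_one fun n ↦ by
    show N (n : K[X]) ≤ 1
    rw [← map_natCast C, hN.2.1]
    exact IsNonarchimedean.apply_natCast_le_one (f := habv.toAbsoluteValue) habv.2.2.2

theorem sub_le_max (hN : IsMultSeminorm abv N) (habv : IsNonarchAbs abv) (f g : K[X]) :
    N (f - g) ≤ max (N f) (N g) := by
  have hneg : N (-g) = N g := map_neg_eq_map (hN.toMulRingSeminorm habv) g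
  rw [sub_eq_add_neg, ← hneg]
  exact hN.isNonarchimedean habv f (-g)

theorem map_prod_X_sub_C (hN : IsMultSeminorm abv N) (habv : IsNonarchAbs abv) (s : Multiset K) :
    N (s.map fun a ↦ X - C a).prod = (s.map fun a ↦ N (X - C a)).prod := by
  have := map_multiset_prod (hN.toMulRingSeminorm habv) (s.map fun a ↦ X - C a)
  rwa [Multiset.map_map] at this

theorem diamB_le (hN : IsMultSeminorm abv N) (c : K) : diamB N ≤ N (X - C c) :=
  ciInf_le ⟨0, by rintro _ ⟨c, rfl⟩; exact hN.1 _⟩ c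

end IsMultSeminorm

section Berkovich

variable {K : Type*} [Field K] {abv : K → ℝ} {M N N' W Z Z' Z₁ Z₂ : K[X] → ℝ}

theorem BerkLE.antisymm (h : BerkLE N N') (h' : BerkLE N' N) : N = N' :=
  funext fun f ↦ (h f).antisymm (h' f)

theorem diamB_mono (hN : IsMultSeminorm abv N) (h : BerkLE N N') : diamB N ≤ diamB N' :=
  le_ciInf fun c ↦ (hN.diamB_le c).trans (h _)

theorem berkLE_of_forall_X_sub_C_le [IsAlgClosed K] (hN : IsMultSeminorm abv N)
    (hN' : IsMultSeminorm abv N') (habv : IsNonarchAbs abv)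
    (h : ∀ c, N (X - C c) ≤ N' (X - C c)) : BerkLE N N' := by
  intro f
  rw [(IsAlgClosed.splits f).eq_prod_roots, hN.2.2.2, hN'.2.2.2, hN.2.1, hN'.2.1,
    hN.map_prod_X_sub_C habv, hN'.map_prod_X_sub_C habv]
  exact mul_le_mul_of_nonneg_left
    (Multiset.prod_map_le_prod_map₀ _ _ (fun c _ ↦ hN.1 _) fun c _ ↦ h c) (habv.1 _)

theorem apply_X_sub_C_le_max_diamB (hM : IsMultSeminorm abv M) (hZ : IsMultSeminorm abv Z)
    (habv : IsNonarchAbs abv) (hMZ : BerkLE M Z) (c : K) :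
    Z (X - C c) ≤ max (M (X - C c)) (diamB Z) := by
  rcases le_or_gt (Z (X - C c)) (diamB Z) with hdiam | hdiam
  · exact le_max_of_le_right hdiam
  obtain ⟨a, ha⟩ := exists_lt_of_ciInf_lt hdiam
  have hsplit : C (a - c) = (X - C c) - (X - C a) := by rw [C_sub]; ring
  have hZ_le : Z (X - C c) ≤ abv (a - c) := by
    have h := hZ.isNonarchimedean habv (X - C a) (C (a - c))
    rw [hZ.2.1, show X - C a + C (a - c) = X - C c by rw [C_sub]; ring] at h
    exact (le_max_iff.mp h).resolve_left ha.not_ge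
  have habv_le : abv (a - c) ≤ M (X - C c) := by
    have h := hM.sub_le_max habv (X - C c) (X - C a)
    rw [← hsplit, hM.2.1] at h
    exact (le_max_iff.mp h).resolve_right (((hMZ _).trans_lt ha).trans_le hZ_le).not_ge
  exact le_max_of_le_left (hZ_le.trans habv_le)

theorem berkLE_of_diamB_le [IsAlgClosed K] (hN : IsMultSeminorm abv N)
    (hZ₁ : IsMultSeminorm abv Z₁) (hZ₂ : IsMultSeminorm abv Z₂) (habv : IsNonarchAbs abv)
    (h₁ : BerkLE N Z₁) (h₂ : BerkLE N Z₂) (hd : diamB Z₁ ≤ diamB Z₂) : BerkLE Z₁ Z₂ :=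
  berkLE_of_forall_X_sub_C_le hZ₁ hZ₂ habv fun c ↦
    (apply_X_sub_C_le_max_diamB hN hZ₁ habv h₁ c).trans
      (max_le (h₂ _) (hd.trans (hZ₂.diamB_le c)))

theorem berkLE_total_of_le [IsAlgClosed K] (hN : IsMultSeminorm abv N)
    (hZ₁ : IsMultSeminorm abv Z₁) (hZ₂ : IsMultSeminorm abv Z₂) (habv : IsNonarchAbs abv)
    (h₁ : BerkLE N Z₁) (h₂ : BerkLE N Z₂) : BerkLE Z₁ Z₂ ∨ BerkLE Z₂ Z₁ :=
  (le_total (diamB Z₁) (diamB Z₂)).imp (berkLE_of_diamB_le hN hZ₁ hZ₂ habv h₁ h₂)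
    (berkLE_of_diamB_le hN hZ₂ hZ₁ habv h₂ h₁)

theorem eq_of_berkLE_of_diamB_le [IsAlgClosed K] (hM : IsMultSeminorm abv M)
    (hZ : IsMultSeminorm abv Z) (habv : IsNonarchAbs abv) (h : BerkLE M Z)
    (hd : diamB Z ≤ diamB M) : M = Z :=
  h.antisymm (berkLE_of_diamB_le hM hZ hM habv h (fun _ ↦ le_rfl) hd)

theorem isBerkJoin_self (hN : IsMultSeminorm abv N) : IsBerkJoin abv N N N :=
  ⟨hN, fun _ ↦ le_rfl, fun _ ↦ le_rfl, fun _ _ h _ ↦ h⟩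

theorem IsBerkJoin.swap (h : IsBerkJoin abv N N' Z) : IsBerkJoin abv N' N Z :=
  ⟨h.1, h.2.2.1, h.2.1, fun W hW h₁ h₂ ↦ h.2.2.2 W hW h₂ h₁⟩

theorem IsBerkJoin.unique (h : IsBerkJoin abv N N' Z) (h' : IsBerkJoin abv N N' Z') : Z = Z' :=
  (h.2.2.2 Z' h'.1 h'.2.1 h'.2.2.1).antisymm (h'.2.2.2 Z h.1 h.2.1 h.2.2.1)

theorem IsBerkJoin.diamB_le (h : IsBerkJoin abv N N' Z) (hW : IsMultSeminorm abv W)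
    (hNW : BerkLE N W) (hN'W : BerkLE N' W) : diamB Z ≤ diamB W :=
  diamB_mono h.1 (h.2.2.2 W hW hNW hN'W)

theorem smallDist_nonneg (hN : IsMultSeminorm abv N) (hN' : IsMultSeminorm abv N')
    (h : IsBerkJoin abv N N' Z) : 0 ≤ smallDist N N' Z := by
  have hd := diamB_mono hN h.2.1
  have hd' := diamB_mono hN' h.2.2.1
  unfold smallDist
  linarith

theorem smallDist_eq_zero_iff [IsAlgClosed K] (hN : IsMultSeminorm abv N)
    (hN' : IsMultSeminorm abv N') (habv : IsNonarchAbs abv) (h : IsBerkJoin abv N N' Z) :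
    smallDist N N' Z = 0 ↔ N = N' := by
  have hd := diamB_mono hN h.2.1
  have hd' := diamB_mono hN' h.2.2.1
  constructor
  · intro h0
    unfold smallDist at h0
    rw [eq_of_berkLE_of_diamB_le hN h.1 habv h.2.1 (by linarith),
      eq_of_berkLE_of_diamB_le hN' h.1 habv h.2.2.1 (by linarith)]
  · rintro rfl
    rw [smallDist, h.unique (isBerkJoin_self hN)]
    ring

theorem smallDist_comm (h : IsBerkJoin abv N N' Z) (h' : IsBerkJoin abv N' N Z') :
    smallDist N N' Z = smallDist N' N Z' := by
  rw [smallDist, smallDist, h.swap.unique h']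
  ring

theorem smallDist_triangle [IsAlgClosed K] {N₁ N₂ N₃ Z₁₂ Z₂₃ Z₁₃ : K[X] → ℝ}
    (h₂ : IsMultSeminorm abv N₂) (habv : IsNonarchAbs abv) (h₁₂ : IsBerkJoin abv N₁ N₂ Z₁₂)
    (h₂₃ : IsBerkJoin abv N₂ N₃ Z₂₃) (h₁₃ : IsBerkJoin abv N₁ N₃ Z₁₃) :
    smallDist N₁ N₃ Z₁₃ ≤ smallDist N₁ N₂ Z₁₂ + smallDist N₂ N₃ Z₂₃ := by
  have hd₁₂ := diamB_mono h₂ h₁₂.2.2.1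
  have hd₂₃ := diamB_mono h₂ h₂₃.2.1
  unfold smallDist
  rcases berkLE_total_of_le h₂ h₁₂.1 h₂₃.1 habv h₁₂.2.2.1 h₂₃.2.1 with hle | hle
  · have hd₁₃ := h₁₃.diamB_le h₂₃.1 (fun f ↦ (h₁₂.2.1 f).trans (hle f)) h₂₃.2.2.1
    linarith
  · have hd₁₃ := h₁₃.diamB_le h₁₂.1 h₁₂.2.1 (fun f ↦ (h₂₃.2.2.1 f).trans (hle f))
    linarith

end Berkovich

theorem stmt18_general {K : Type*} [Field K] [IsAlgClosed K] (abv : K → ℝ)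
    (habv : IsNonarchAbs abv) :
    (∀ N N' Z : Polynomial K → ℝ, IsMultSeminorm abv N → IsMultSeminorm abv N' →
      IsBerkJoin abv N N' Z →
      0 ≤ smallDist N N' Z ∧ (smallDist N N' Z = 0 ↔ N = N')) ∧
    (∀ N N' Z Z' : Polynomial K → ℝ, IsMultSeminorm abv N → IsMultSeminorm abv N' →
      IsBerkJoin abv N N' Z → IsBerkJoin abv N' N Z' →
      smallDist N N' Z = smallDist N' N Z') ∧
    (∀ N₁ N₂ N₃ Z₁₂ Z₂₃ Z₁₃ : Polynomial K → ℝ,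
      IsMultSeminorm abv N₁ → IsMultSeminorm abv N₂ → IsMultSeminorm abv N₃ →
      IsBerkJoin abv N₁ N₂ Z₁₂ → IsBerkJoin abv N₂ N₃ Z₂₃ → IsBerkJoin abv N₁ N₃ Z₁₃ →
      smallDist N₁ N₃ Z₁₃ ≤ smallDist N₁ N₂ Z₁₂ + smallDist N₂ N₃ Z₂₃) :=
  ⟨fun _ _ _ hN hN' h ↦ ⟨smallDist_nonneg hN hN' h, smallDist_eq_zero_iff hN hN' habv h⟩,
    fun _ _ _ _ _ _ h h' ↦ smallDist_comm h h',
    fun _ _ _ _ _ _ _ h₂ _ h₁₂ h₂₃ h₁₃ ↦ smallDist_triangle h₂ habv h₁₂ h₂₃ h₁₃⟩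

/-- The small metric `d(ξ,ξ') = 2 diam(ξ ∨ ξ') - diam ξ - diam ξ'` is a metric on the
Berkovich affine line: nonnegative, vanishing exactly on the diagonal, symmetric, and
satisfying the triangle inequality. -/
theorem stmt18 {K : Type*} [Field K] [IsAlgClosed K] (abv : K → ℝ)
    (habv : IsNonarchAbs abv)
    (hnontriv : ∃ x : K, abv x ≠ 0 ∧ abv x ≠ 1)
    (hcomplete : ∀ s : ℕ → K,
      (∀ ε : ℝ, 0 < ε → ∃ N, ∀ m ≥ N, ∀ n ≥ N, abv (s m - s n) < ε) →
      ∃ x : K, ∀ ε : ℝ, 0 < ε → ∃ N, ∀ n ≥ N, abv (s n - x) < ε) :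
    (∀ N N' Z : Polynomial K → ℝ, IsMultSeminorm abv N → IsMultSeminorm abv N' →
      IsBerkJoin abv N N' Z →
      0 ≤ smallDist N N' Z ∧ (smallDist N N' Z = 0 ↔ N = N')) ∧
    (∀ N N' Z Z' : Polynomial K → ℝ, IsMultSeminorm abv N → IsMultSeminorm abv N' →
      IsBerkJoin abv N N' Z → IsBerkJoin abv N' N Z' →
      smallDist N N' Z = smallDist N' N Z') ∧
    (∀ N₁ N₂ N₃ Z₁₂ Z₂₃ Z₁₃ : Polynomial K → ℝ,
      IsMultSeminorm abv N₁ → IsMultSeminorm abv N₂ → IsMultSeminorm abv N₃ →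
      IsBerkJoin abv N₁ N₂ Z₁₂ → IsBerkJoin abv N₂ N₃ Z₂₃ → IsBerkJoin abv N₁ N₃ Z₁₃ →
      smallDist N₁ N₃ Z₁₃ ≤ smallDist N₁ N₂ Z₁₂ + smallDist N₂ N₃ Z₂₃) :=
  stmt18_general abv habv
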